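/- arXiv:1903.01729 — 2 statements merged into one kernel-verified Lean document; each statement's English description precedes it below -/
import Mathlib

section
/- Let a, b, d, e be integers with a > 0, e ≥ 4, b > ae, d ≥ 4. Suppose a transversal arrangement of d curves has pairwise intersection number h = 2ab - a²e, number of singular points f_0, and satisfies ∑_{k≥2}k(k-1)t_k = h·d(d-1) with t_k = 0 for k ≥ d, and f_0 ≥ d. Then f_0 > 2ab - a²e + 1; in particular f_0 ≥ 2ab - a²e + 2 ≥ 4a² + 2a + 2 ≥ 8. -/
open Finset

/-!
Since every multiplicity is at most `d - 1`, the weights `k (k - 1)` are at most `(d - 1)(d - 2)`,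
so the combinatorial identity gives `h d (d - 1) ≤ (d - 1)(d - 2) f₀`, i.e. `h d ≤ (d - 2) f₀`.
If `f₀ ≤ h + 1`, this forces `d ≥ 2h + 2`, and then `f₀ ≥ d > h + 1`, a contradiction.
The remaining bounds come from `b ≥ ae + 1` and `e ≥ 4`.
-/

lemma Int.mul_sub_one_le_mul_sub_one {k m : ℤ} (hk : 0 ≤ k) (hkm : k ≤ m) :
    k * (k - 1) ≤ m * (m - 1) := by
  rcases hk.eq_or_lt with rfl | hk
  · nlinarith [Int.le_self_sq m]
  · nlinarith [mul_nonneg (sub_nonneg.2 hkm) (show 0 ≤ m + k - 1 by linarith)]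

lemma sum_mul_sub_one_mul_le (s : Finset ℕ) (t : ℕ → ℕ) (m : ℤ)
    (ht : ∀ k ∈ s, t k ≠ 0 → (k : ℤ) ≤ m) :
    ∑ k ∈ s, (k : ℤ) * (k - 1) * t k ≤ m * (m - 1) * ∑ k ∈ s, (t k : ℤ) := by
  rw [Finset.mul_sum]
  refine Finset.sum_le_sum fun k hks => ?_
  by_cases hk : t k = 0
  · simp [hk]
  · exact mul_le_mul_of_nonneg_right
      (Int.mul_sub_one_le_mul_sub_one (Int.natCast_nonneg k) (ht k hks hk)) (Int.natCast_nonneg _)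

lemma add_one_lt_of_mul_le_sub_two_mul {h d f : ℤ} (hd : 2 ≤ d) (hdf : d ≤ f)
    (hmul : h * d ≤ (d - 2) * f) : h + 1 < f := by
  by_contra! hf
  nlinarith

lemma four_mul_sq_add_two_mul_le {a b e : ℤ} (ha : 0 < a) (he : 4 ≤ e) (hb : a * e < b) :
    4 * a ^ 2 + 2 * a ≤ 2 * a * b - a ^ 2 * e := by
  have hab : a * (a * e + 1) ≤ a * b := mul_le_mul_of_nonneg_left hb ha.le
  have hae : a ^ 2 * 4 ≤ a ^ 2 * e := mul_le_mul_of_nonneg_left he (sq_nonneg a)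
  linarith

/-- f₀ > 2ab - a²e + 1, hence f₀ ≥ 2ab - a²e + 2 ≥ 4a² + 2a + 2 ≥ 8. -/
theorem stmt_5 (a b e : ℤ) (ha : 0 < a) (he : 4 ≤ e) (hb : a * e < b)
    (d : ℕ) (hd : 4 ≤ d) (t : ℕ → ℕ)
    (hsupp : ∀ k, t k ≠ 0 → 2 ≤ k ∧ k ≤ d - 1)
    (hcomb : ∑ k ∈ Finset.range (d + 1), (k : ℤ) * (k - 1) * t k
      = (2 * a * b - a ^ 2 * e) * d * (d - 1))
    (f0 : ℤ) (hf0 : f0 = ∑ k ∈ Finset.range (d + 1), (t k : ℤ))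
    (hf0d : (d : ℤ) ≤ f0) :
    f0 > 2 * a * b - a ^ 2 * e + 1
      ∧ f0 ≥ 2 * a * b - a ^ 2 * e + 2
      ∧ 2 * a * b - a ^ 2 * e + 2 ≥ 4 * a ^ 2 + 2 * a + 2
      ∧ 4 * a ^ 2 + 2 * a + 2 ≥ 8 := by
  have hh := four_mul_sq_add_two_mul_le ha he hb
  have hdZ : (4 : ℤ) ≤ d := by exact_mod_cast hd
  have hweights := sum_mul_sub_one_mul_le (range (d + 1)) t ((d : ℤ) - 1)
    fun k _ hk => by have := (hsupp k hk).2; omega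
  rw [hcomb, ← hf0, sub_sub, one_add_one_eq_two] at hweights
  have hmul : (2 * a * b - a ^ 2 * e) * d ≤ (d - 2) * f0 :=
    le_of_mul_le_mul_right (by linarith) (show (0 : ℤ) < d - 1 by linarith)
  have hmain := add_one_lt_of_mul_le_sub_two_mul (by linarith) hf0d hmul
  exact ⟨hmain, by linarith, by linarith, by nlinarith⟩
end

section
/- Let a, b, d, e, g be integers with a ≥ 1, e ≥ 4, b ≥ ae, d ≥ 4, g ≥ 0, and suppose 16 - 16g = -d((3a-1)(2b-ae) + 2a(g-1)). If a ≥ 2, or if a = 1 and d ≥ 8, this equation has no solution. -/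
/-!
Move the `g`-terms to one side: the equation reads
`d * ((3a - 1)(2b - ae) - 2a) + (2ad - 16) g = -16`.
From `b ≥ ae` the first coefficient is at least `a (e (3a - 1) - 2) > 0`, and the hypotheses on
`a` and `d` give `2ad ≥ 16`, so the left side is positive.
-/

theorem ballQuotient_eq_iff (a b d e g : ℤ) :
    16 - 16 * g = -d * ((3 * a - 1) * (2 * b - a * e) + 2 * a * (g - 1)) ↔
      d * ((3 * a - 1) * (2 * b - a * e) - 2 * a) + (2 * a * d - 16) * g = -16 := by
  constructor <;> intro h <;> linear_combination h

theorem ballQuotient_coeff_pos {a b e : ℤ} (ha : 1 ≤ a) (he : 2 ≤ e) (hb : a * e ≤ b) :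
    0 < (3 * a - 1) * (2 * b - a * e) - 2 * a := by
  have h3a : 2 ≤ 3 * a - 1 := by linarith
  have hgap : 0 ≤ (3 * a - 1) * (2 * b - 2 * a * e) :=
    mul_nonneg (by linarith) (by linarith)
  calc 0 < a * ((3 * a - 1) * e - 2) := mul_pos (by linarith) (by nlinarith)
    _ ≤ (3 * a - 1) * (2 * b - a * e) - 2 * a := by linarith

/-- The ball quotient equation (5.4) has no solution when a ≥ 2, or a = 1 and d ≥ 8. -/
theorem stmt_15 (a b d e g : ℤ) (ha : 1 ≤ a) (he : 4 ≤ e) (hb : a * e ≤ b)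
    (hd : 4 ≤ d) (hg : 0 ≤ g)
    (hcase : 2 ≤ a ∨ (a = 1 ∧ 8 ≤ d)) :
    16 - 16 * g ≠ -d * ((3 * a - 1) * (2 * b - a * e) + 2 * a * (g - 1)) := by
  rw [Ne, ballQuotient_eq_iff]
  have hcoeff := ballQuotient_coeff_pos ha (by linarith) hb
  have h16 : 16 ≤ 2 * a * d := by
    rcases hcase with ha2 | ⟨rfl, hd8⟩ <;> nlinarith
  have hpos : 0 < d * ((3 * a - 1) * (2 * b - a * e) - 2 * a) + (2 * a * d - 16) * g :=
    add_pos_of_pos_of_nonneg (mul_pos (by linarith) hcoeff) (mul_nonneg (by linarith) hg)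
  linarith
end
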